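/- Let R be an equivalence relation on a set U and X ⊆ U. The collection τ_R = {U, ∅, R_*(X), R^*(X), B_R(X)} is a topology on U: it contains ∅ and U, and is closed under arbitrary unions and finite intersections of its members. -/

import Mathlib

/-!
Reflexivity gives `R_*(X) ⊆ R^*(X)`, and for any two sets `A ⊆ B` the five sets
`U, ∅, A, B, B \ A` are closed under binary unions and intersections
(e.g. `A ∪ (B \ A) = B`, `A ∩ (B \ A) = ∅`). The family is finite, so closure under
binary unions already gives closure under arbitrary unions.
-/

variable {α : Type*}

/-- Lower approximation: points whose equivalence class is contained in `X`. -/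
def lowerApprox (R : α → α → Prop) (X : Set α) : Set α := {x | ∀ y, R x y → y ∈ X}

/-- Upper approximation: points whose equivalence class meets `X`. -/
def upperApprox (R : α → α → Prop) (X : Set α) : Set α := {x | ∃ y, R x y ∧ y ∈ X}

/-- Boundary region. -/
def roughBoundary (R : α → α → Prop) (X : Set α) : Set α := upperApprox R X \ lowerApprox R X

/-- The rough topology as a collection of sets. -/
def roughTau (R : α → α → Prop) (X : Set α) : Set (Set α) :=
  {Set.univ, ∅, lowerApprox R X, upperApprox R X, roughBoundary R X}

theorem lowerApprox_subset_upperApprox {R : α → α → Prop} (hR : ∀ x, R x x) (X : Set α) :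
    lowerApprox R X ⊆ upperApprox R X :=
  fun x hx => ⟨x, hR x, hx x (hR x)⟩

section NestedPair

variable {A B : Set α}

theorem supClosed_nestedPair (hAB : A ⊆ B) :
    SupClosed ({Set.univ, ∅, A, B, B \ A} : Set (Set α)) := by
  have hAB' : A ∪ B = B := Set.union_eq_right.mpr hAB
  have hBA : B ∪ A = B := Set.union_eq_left.mpr hAB
  have hAD : A ∪ B \ A = B := Set.union_sdiff_cancel hAB
  have hDA : B \ A ∪ A = B := Set.sdiff_union_of_subset hAB
  have hBD : B ∪ B \ A = B := Set.union_eq_left.mpr Set.sdiff_subset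
  have hDB : B \ A ∪ B = B := Set.union_eq_right.mpr Set.sdiff_subset
  intro s hs t ht
  simp only [Set.mem_insert_iff, Set.mem_singleton_iff] at hs ht
  rcases hs with hs | hs | hs | hs | hs <;> rcases ht with ht | ht | ht | ht | ht <;>
    simp only [hs, ht] <;> simp [*]

theorem infClosed_nestedPair (hAB : A ⊆ B) :
    InfClosed ({Set.univ, ∅, A, B, B \ A} : Set (Set α)) := by
  have hAB' : A ∩ B = A := Set.inter_eq_left.mpr hAB
  have hBA : B ∩ A = A := Set.inter_eq_right.mpr hAB
  have hAD : A ∩ (B \ A) = ∅ := Set.inter_sdiff_self A B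
  have hDA : B \ A ∩ A = ∅ := Set.sdiff_inter_self
  have hBD : B ∩ (B \ A) = B \ A := Set.inter_eq_right.mpr Set.sdiff_subset
  have hDB : B \ A ∩ B = B \ A := Set.inter_eq_left.mpr Set.sdiff_subset
  intro s hs t ht
  simp only [Set.mem_insert_iff, Set.mem_singleton_iff] at hs ht
  rcases hs with hs | hs | hs | hs | hs <;> rcases ht with ht | ht | ht | ht | ht <;>
    simp only [hs, ht] <;> simp [*]

theorem sUnion_mem_nestedPair (hAB : A ⊆ B) {S : Set (Set α)}
    (hS : S ⊆ {Set.univ, ∅, A, B, B \ A}) : ⋃₀ S ∈ ({Set.univ, ∅, A, B, B \ A} : Set (Set α)) :=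
  (supClosed_nestedPair hAB).sSup_mem ((Set.toFinite _).subset hS) (by simp) hS

end NestedPair

theorem roughTau_isTopology
    (R : α → α → Prop) (hR : Equivalence R) (X : Set α) :
    (∅ : Set α) ∈ roughTau R X ∧ (Set.univ : Set α) ∈ roughTau R X ∧
    (∀ S ⊆ roughTau R X, ⋃₀ S ∈ roughTau R X) ∧
    (∀ A ∈ roughTau R X, ∀ B ∈ roughTau R X, A ∩ B ∈ roughTau R X) := by
  have hLU := lowerApprox_subset_upperApprox hR.refl X
  exact ⟨by simp [roughTau], by simp [roughTau], fun S hS => sUnion_mem_nestedPair hLU hS,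
    fun A hA B hB => infClosed_nestedPair hLU hA hB⟩
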